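/- arXiv:1208.4659 — 4 statements merged into one kernel-verified Lean document; each statement's English description precedes it below -/
import Mathlib

section
/- Let L ⊆ M^{m×n}(ℝ) be a linear subspace with no nonzero rank-1 matrix and let A be the orthogonal projection onto L^⊥. Then A satisfies the strict Legendre–Hadamard condition: there exists μ > 0 such that ⟨a ⊗ b, A(a ⊗ b)⟩ ≥ μ |a|² |b|² for all a ∈ ℝ^m, b ∈ ℝ^n. -/
open scoped RealInnerProductSpace

/-- The `m × n` matrix `a ⊗ b` with entries `aᵢ bⱼ`, in Frobenius space. -/
noncomputable def matTensor {m n : ℕ} (a : EuclideanSpace ℝ (Fin m))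
    (b : EuclideanSpace ℝ (Fin n)) : EuclideanSpace ℝ (Fin m × Fin n) :=
  WithLp.toLp 2 (fun p => a p.1 * b p.2)

/-!
The map `(a, b) ↦ P (a ⊗ b)`, with `P` the orthogonal projection onto `Lᗮ`, is continuous and
bilinear, and it vanishes only if `a ⊗ b ∈ Lᗮᗮ = L`, i.e. only if `a = 0` or `b = 0`. By
compactness of the product of the unit spheres, `‖P (a ⊗ b)‖ ≥ c ‖a‖ ‖b‖` for some `c > 0`, and
`⟪v, P v⟫ = ‖P v‖²` turns this into the Legendre–Hadamard bound with `μ = c²`.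
-/

theorem ContinuousLinearMap.exists_pos_mul_norm_mul_norm_le_norm_apply_apply
    {𝕜 E F G : Type*} [RCLike 𝕜] [NormedAddCommGroup E] [NormedSpace 𝕜 E] [ProperSpace E]
    [NormedAddCommGroup F] [NormedSpace 𝕜 F] [ProperSpace F]
    [NormedAddCommGroup G] [NormedSpace 𝕜 G]
    (B : E →L[𝕜] F →L[𝕜] G) (hB : ∀ a b, a ≠ 0 → b ≠ 0 → B a b ≠ 0) :
    ∃ c, 0 < c ∧ ∀ a b, c * ‖a‖ * ‖b‖ ≤ ‖B a b‖ := by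
  have hS : IsCompact (Metric.sphere (0 : E) 1 ×ˢ Metric.sphere (0 : F) 1) :=
    (isCompact_sphere 0 1).prod (isCompact_sphere 0 1)
  have hcont : Continuous fun x : E × F => ‖B x.1 x.2‖ :=
    (B.continuous₂.comp continuous_id).norm
  obtain ⟨c, hc, hcS⟩ := hS.exists_forall_le' hcont.continuousOn
    (a := 0) fun x ⟨ha, hb⟩ => norm_pos_iff.2 <| hB _ _
      (ne_zero_of_mem_unit_sphere ⟨_, ha⟩) (ne_zero_of_mem_unit_sphere ⟨_, hb⟩)
  refine ⟨c, hc, fun a b => ?_⟩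
  rcases eq_or_ne a 0 with rfl | ha
  · simp
  rcases eq_or_ne b 0 with rfl | hb
  · simp
  have hunit := hcS ((‖a‖⁻¹ : 𝕜) • a, (‖b‖⁻¹ : 𝕜) • b)
    ⟨mem_sphere_zero_iff_norm.2 (norm_smul_inv_norm ha),
      mem_sphere_zero_iff_norm.2 (norm_smul_inv_norm hb)⟩
  have ha' : 0 < ‖a‖ := norm_pos_iff.2 ha
  have hb' : 0 < ‖b‖ := norm_pos_iff.2 hb
  simp only [map_smul, smul_apply, norm_smul, norm_inv, RCLike.norm_ofReal,
    abs_norm] at hunit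
  calc c * ‖a‖ * ‖b‖ ≤ (‖b‖⁻¹ * (‖a‖⁻¹ * ‖B a b‖)) * ‖a‖ * ‖b‖ := by gcongr
    _ = ‖B a b‖ := by field_simp

noncomputable def matTensorL (m n : ℕ) :
    EuclideanSpace ℝ (Fin m) →L[ℝ] EuclideanSpace ℝ (Fin n) →L[ℝ]
      EuclideanSpace ℝ (Fin m × Fin n) :=
  (LinearMap.mk₂ ℝ matTensor
    (fun a a' b => by ext p; simp [matTensor, add_mul])
    (fun c a b => by ext p; simp [matTensor, mul_assoc])
    (fun a b b' => by ext p; simp [matTensor, mul_add])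
    (fun c a b => by ext p; simp [matTensor, mul_left_comm])).toContinuousBilinearMap

theorem Submodule.inner_self_starProjection {E : Type*} [NormedAddCommGroup E]
    [InnerProductSpace ℝ E] (K : Submodule ℝ E) [K.HasOrthogonalProjection] (v : E) :
    ⟪v, K.starProjection v⟫ = ‖K.starProjection v‖ ^ 2 := by
  simpa [real_inner_comm] using K.re_inner_starProjection_eq_normSq v

/-- If `L` has no nonzero rank-1 matrix and `A` is the orthogonal projection onto `L^⊥`,
then `A` satisfies the strict Legendre–Hadamard condition:
`⟨a ⊗ b, A(a ⊗ b)⟩ ≥ μ |a|² |b|²` for some `μ > 0`. -/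
theorem stmt_5 {m n : ℕ} (L : Submodule ℝ (EuclideanSpace ℝ (Fin m × Fin n)))
    (hL : ∀ (a : EuclideanSpace ℝ (Fin m)) (b : EuclideanSpace ℝ (Fin n)),
      matTensor a b ∈ L → a = 0 ∨ b = 0) :
    ∃ μ : ℝ, 0 < μ ∧
      ∀ (a : EuclideanSpace ℝ (Fin m)) (b : EuclideanSpace ℝ (Fin n)),
        ⟪matTensor a b,
          (Lᗮ.orthogonalProjectionOnto (matTensor a b) : EuclideanSpace ℝ (Fin m × Fin n))⟫ ≥
          μ * ‖a‖ ^ 2 * ‖b‖ ^ 2 := by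
  set B := ContinuousLinearMap.compL ℝ _ _ _ Lᗮ.starProjection ∘L matTensorL m n
  have hB : ∀ a b, a ≠ 0 → b ≠ 0 → B a b ≠ 0 := fun a b ha hb hab => by
    have hmem : matTensor a b ∈ Lᗮᗮ := (Lᗮ.starProjection_apply_eq_zero_iff).1 hab
    exact (hL a b (L.orthogonal_orthogonal ▸ hmem)).elim ha hb
  obtain ⟨c, hc, hcB⟩ := B.exists_pos_mul_norm_mul_norm_le_norm_apply_apply hB
  refine ⟨c ^ 2, by positivity, fun a b => ?_⟩
  rw [← Submodule.starProjection_apply, Submodule.inner_self_starProjection]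
  calc c ^ 2 * ‖a‖ ^ 2 * ‖b‖ ^ 2 = (c * ‖a‖ * ‖b‖) ^ 2 := by ring
    _ ≤ ‖B a b‖ ^ 2 := by gcongr; exact hcB a b
end

section
/- Suppose u, v : Ω → ℝ are differentiable on an open set Ω ⊆ ℝ² and satisfy the Cauchy–Riemann equations u_x = v_y, u_y = -v_x everywhere on Ω. Then u is weakly harmonic: ∫_Ω (Δφ) u = 0 for every φ ∈ C_c^∞(Ω). -/
open MeasureTheory

/-- The Laplacian of a function on `ℝ²` (as iterated directional derivatives). -/
noncomputable def lap2 (φ : ℝ × ℝ → ℝ) (p : ℝ × ℝ) : ℝ :=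
  fderiv ℝ (fun q => fderiv ℝ φ q (1, 0)) p (1, 0) +
    fderiv ℝ (fun q => fderiv ℝ φ q (0, 1)) p (0, 1)

private lemma diffAt_complex_of_real {f : ℂ → ℂ} {L : ℂ →L[ℝ] ℂ} {c z : ℂ}
    (h : HasFDerivAt f L z) (hL : ∀ w, L w = c * w) : DifferentiableAt ℂ f z := by
  have h2 : HasFDerivAt f (c • ContinuousLinearMap.id ℂ ℂ) z := by
    rw [hasFDerivAt_iff_isLittleO_nhds_zero] at h ⊢
    simpa only [ContinuousLinearMap.smul_apply, ContinuousLinearMap.id_apply, smul_eq_mul,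
      ← hL] using h
  exact h2.differentiableAt

private lemma cr_contDiffAt (Ω : Set (ℝ × ℝ)) (hΩ : IsOpen Ω) (u v : ℝ × ℝ → ℝ)
    (hu : ∀ p ∈ Ω, DifferentiableAt ℝ u p)
    (hv : ∀ p ∈ Ω, DifferentiableAt ℝ v p)
    (hCR1 : ∀ p ∈ Ω, fderiv ℝ u p (1, 0) = fderiv ℝ v p (0, 1))
    (hCR2 : ∀ p ∈ Ω, fderiv ℝ u p (0, 1) = - fderiv ℝ v p (1, 0)) :
    ∀ p ∈ Ω, ∀ n : WithTop ℕ∞, ContDiffAt ℝ n u p ∧ ContDiffAt ℝ n v p := by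
  set e := Complex.equivRealProdCLM with he
  set f : ℂ → ℂ := fun z => (u (e z) : ℂ) + (v (e z) : ℂ) * Complex.I with hf
  have hfd : ∀ z : ℂ, e z ∈ Ω → DifferentiableAt ℂ f z := by
    intro z hz
    have hu1 : HasFDerivAt (fun w : ℂ => u (e w))
        ((fderiv ℝ u (e z)).comp (e : ℂ →L[ℝ] ℝ × ℝ)) z :=
      ((hu _ hz).hasFDerivAt).comp z e.hasFDerivAt
    have hv1 : HasFDerivAt (fun w : ℂ => v (e w))
        ((fderiv ℝ v (e z)).comp (e : ℂ →L[ℝ] ℝ × ℝ)) z :=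
      ((hv _ hz).hasFDerivAt).comp z e.hasFDerivAt
    have h1 : HasFDerivAt (fun w : ℂ => (u (e w) : ℂ))
        (Complex.ofRealCLM.comp ((fderiv ℝ u (e z)).comp (e : ℂ →L[ℝ] ℝ × ℝ))) z :=
      Complex.ofRealCLM.hasFDerivAt.comp z hu1
    have h2 : HasFDerivAt (fun w : ℂ => (v (e w) : ℂ) * Complex.I)
        (Complex.I • (Complex.ofRealCLM.comp
          ((fderiv ℝ v (e z)).comp (e : ℂ →L[ℝ] ℝ × ℝ)))) z :=
      (Complex.ofRealCLM.hasFDerivAt.comp z hv1).mul_const Complex.I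
    have hF : HasFDerivAt f _ z := h1.add h2
    apply diffAt_complex_of_real hF
      (c := (fderiv ℝ u (e z) (1, 0) : ℂ) + (fderiv ℝ v (e z) (1, 0) : ℂ) * Complex.I)
    intro w
    have key : ∀ (T : (ℝ × ℝ) →L[ℝ] ℝ) (x y : ℝ), T (x, y) = x * T (1, 0) + y * T (0, 1) := by
      intro T x y
      have hxy : ((x, y) : ℝ × ℝ) = x • ((1 : ℝ), (0 : ℝ)) + y • ((0 : ℝ), (1 : ℝ)) := by
        simp [Prod.ext_iff]
      rw [hxy, map_add, T.map_smul, T.map_smul, smul_eq_mul, smul_eq_mul]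
    have hew : e w = (w.re, w.im) := rfl
    have hua : fderiv ℝ u (e z) (e w)
        = w.re * fderiv ℝ u (e z) (1, 0) + w.im * fderiv ℝ u (e z) (0, 1) := by
      rw [hew, key]
    have hva : fderiv ℝ v (e z) (e w)
        = w.re * fderiv ℝ v (e z) (1, 0) + w.im * fderiv ℝ v (e z) (0, 1) := by
      rw [hew, key]
    simp only [ContinuousLinearMap.add_apply, ContinuousLinearMap.coe_comp', Function.comp_apply,
      ContinuousLinearMap.smul_apply, ContinuousLinearEquiv.coe_coe, Complex.ofRealCLM_apply,
      smul_eq_mul]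
    rw [hua, hva, hCR1 _ hz, hCR2 _ hz]
    set a := fderiv ℝ v (e z) (0, 1)
    set b := fderiv ℝ v (e z) (1, 0)
    simp only [Complex.ext_iff, Complex.add_re, Complex.add_im, Complex.mul_re, Complex.mul_im,
      Complex.ofReal_re, Complex.ofReal_im, Complex.I_re, Complex.I_im, Complex.ofReal_add,
      Complex.ofReal_mul, Complex.ofReal_neg, Complex.neg_re, Complex.neg_im]
    constructor <;> ring
  have hDO : DifferentiableOn ℂ f (e ⁻¹' Ω) :=
    fun z hz => (hfd z hz).differentiableWithinAt
  have hfa : AnalyticOnNhd ℂ f (e ⁻¹' Ω) := hDO.analyticOnNhd (hΩ.preimage e.continuous)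
  have hueq : u = fun p => (f (e.symm p)).re := by
    funext p; simp [hf]
  have hveq : v = fun p => (f (e.symm p)).im := by
    funext p; simp [hf]
  intro p hp n
  have hfz : AnalyticAt ℝ f (e.symm p) := (hfa _ (by simp [hp])).restrictScalars
  constructor
  · rw [hueq]
    exact ((Complex.reCLM.analyticAt _).comp (hfz.comp
      ((e.symm : ℝ × ℝ →L[ℝ] ℂ).analyticAt p))).contDiffAt
  · rw [hveq]
    exact ((Complex.imCLM.analyticAt _).comp (hfz.comp
      ((e.symm : ℝ × ℝ →L[ℝ] ℂ).analyticAt p))).contDiffAt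

private lemma cr_harmonic (Ω : Set (ℝ × ℝ)) (hΩ : IsOpen Ω) (u v : ℝ × ℝ → ℝ)
    (hreg : ∀ p ∈ Ω, ContDiffAt ℝ 2 v p)
    (hCR1 : ∀ p ∈ Ω, fderiv ℝ u p (1, 0) = fderiv ℝ v p (0, 1))
    (hCR2 : ∀ p ∈ Ω, fderiv ℝ u p (0, 1) = - fderiv ℝ v p (1, 0)) :
    ∀ p ∈ Ω, lap2 u p = 0 := by
  intro p hp
  have hΩn : Ω ∈ nhds p := hΩ.mem_nhds hp
  have hvC : ContDiffAt ℝ 2 v p := hreg p hp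
  have hvd : DifferentiableAt ℝ (fderiv ℝ v) p :=
    (hvC.fderiv_right (m := 1) (by norm_num)).differentiableAt (by norm_num)
  have hsym := hvC.isSymmSndFDerivAt (by simp)
  have e1 : (fun q => fderiv ℝ u q (1, 0)) =ᶠ[nhds p] (fun q => fderiv ℝ v q (0, 1)) := by
    filter_upwards [hΩn] with q hq; exact hCR1 q hq
  have e2 : (fun q => fderiv ℝ u q (0, 1)) =ᶠ[nhds p] (fun q => -fderiv ℝ v q (1, 0)) := by
    filter_upwards [hΩn] with q hq; simpa using hCR2 q hq
  have key : ∀ w w' : ℝ × ℝ,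
      fderiv ℝ (fun q => fderiv ℝ v q w) p w' = fderiv ℝ (fderiv ℝ v) p w' w := by
    intro w w'
    rw [fderiv_clm_apply hvd (differentiableAt_const w)]
    simp
  have hneg : fderiv ℝ (fun q => -fderiv ℝ v q (1, 0)) p (0, 1)
      = - fderiv ℝ (fun q => fderiv ℝ v q (1, 0)) p (0, 1) := by
    rw [fderiv_fun_neg]; simp
  unfold lap2
  rw [e1.fderiv_eq, e2.fderiv_eq, hneg, key, key, hsym.eq (1, 0) (0, 1)]
  ring

private lemma smoothD1 {g : ℝ × ℝ → ℝ} (hg : ContDiff ℝ ((⊤ : ℕ∞) : WithTop ℕ∞) g)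
    (w : ℝ × ℝ) : ContDiff ℝ ((⊤ : ℕ∞) : WithTop ℕ∞) (fun q => fderiv ℝ g q w) :=
  (hg.fderiv_right (by norm_num)).clm_apply contDiff_const

private lemma suppD1 {g : ℝ × ℝ → ℝ} (hgs : HasCompactSupport g) (w : ℝ × ℝ) :
    HasCompactSupport (fun q => fderiv ℝ g q w) :=
  (hgs.fderiv ℝ).comp_left (g := fun L : (ℝ × ℝ) →L[ℝ] ℝ => L w) (by simp)

private lemma mulInteg {a b : ℝ × ℝ → ℝ} (ha : Continuous a) (hb : Continuous b)
    (hcs : HasCompactSupport a) : Integrable (fun p => a p * b p) volume :=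
  (ha.mul hb).integrable_of_hasCompactSupport (hcs.mul_right)

private lemma ibp_dir {g h : ℝ × ℝ → ℝ}
    (hg : ContDiff ℝ ((⊤ : ℕ∞) : WithTop ℕ∞) g) (hh : ContDiff ℝ ((⊤ : ℕ∞) : WithTop ℕ∞) h)
    (hgs : HasCompactSupport g) (hhs : HasCompactSupport h) (w : ℝ × ℝ) :
    ∫ p, fderiv ℝ (fun q => fderiv ℝ g q w) p w * h p
      = ∫ p, g p * fderiv ℝ (fun q => fderiv ℝ h q w) p w := by
  have hG := smoothD1 hg w
  have hH := smoothD1 hh w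
  have hGs := suppD1 hgs w
  have hHs := suppD1 hhs w
  have one_le : (1 : WithTop ℕ∞) ≤ ((⊤ : ℕ∞) : WithTop ℕ∞) := by norm_num
  have h1 : ∫ p, (fun q => fderiv ℝ g q w) p * fderiv ℝ h p w
      = - ∫ p, fderiv ℝ (fun q => fderiv ℝ g q w) p w * h p :=
    integral_mul_fderiv_eq_neg_fderiv_mul_of_integrable
      (mulInteg (smoothD1 hG w).continuous hh.continuous (suppD1 hGs w))
      (mulInteg hG.continuous hH.continuous hGs)
      (mulInteg hG.continuous hh.continuous hGs)
      (fun x _ => hG.differentiable (by simp) x) (fun x _ => hh.differentiable (by simp) x)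
  have h2 : ∫ p, g p * fderiv ℝ (fun q => fderiv ℝ h q w) p w
      = - ∫ p, fderiv ℝ g p w * (fun q => fderiv ℝ h q w) p :=
    integral_mul_fderiv_eq_neg_fderiv_mul_of_integrable
      (mulInteg (smoothD1 hg w).continuous hH.continuous (suppD1 hgs w))
      (mulInteg hg.continuous (smoothD1 hH w).continuous hgs)
      (mulInteg hg.continuous hH.continuous hgs)
      (fun x _ => hg.differentiable (by simp) x) (fun x _ => hH.differentiable (by simp) x)
  simp only at h1 h2
  rw [h2]
  rw [← neg_eq_iff_eq_neg] at h1
  rw [← h1]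

/-- If `u, v` are pointwise differentiable on the open set `Ω ⊆ ℝ²` and satisfy the
Cauchy–Riemann equations `u_x = v_y`, `u_y = -v_x` on `Ω`, then `u` is weakly harmonic:
`∫_Ω (Δφ) u = 0` for every `φ ∈ C_c^∞(Ω)`. -/
theorem stmt_8 (Ω : Set (ℝ × ℝ)) (hΩ : IsOpen Ω) (u v : ℝ × ℝ → ℝ)
    (hu : ∀ p ∈ Ω, DifferentiableAt ℝ u p)
    (hv : ∀ p ∈ Ω, DifferentiableAt ℝ v p)
    (hCR1 : ∀ p ∈ Ω, fderiv ℝ u p (1, 0) = fderiv ℝ v p (0, 1))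
    (hCR2 : ∀ p ∈ Ω, fderiv ℝ u p (0, 1) = - fderiv ℝ v p (1, 0)) :
    ∀ φ : ℝ × ℝ → ℝ, ContDiff ℝ (⊤ : ℕ∞) φ → HasCompactSupport φ → tsupport φ ⊆ Ω →
      ∫ p in Ω, lap2 φ p * u p = 0 := by
  intro φ hφ hφs hφΩ
  have hreg := cr_contDiffAt Ω hΩ u v hu hv hCR1 hCR2
  have hharm := cr_harmonic Ω hΩ u v (fun p hp => (hreg p hp 2).2) hCR1 hCR2
  have hφsm : ContDiff ℝ ((⊤ : ℕ∞) : WithTop ℕ∞) φ := hφ.of_le (by simp)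
  -- cutoff
  obtain ⟨L, hLc, hKL, hLΩ⟩ := exists_compact_between hφs hΩ hφΩ
  obtain ⟨χ, hχ1, hχ0, -⟩ := exists_contMDiffMap_one_nhds_of_subset_interior (n := (⊤ : ℕ∞))
    (modelWithCornersSelf ℝ (ℝ × ℝ)) (isClosed_tsupport φ) hKL
  rw [eventually_nhdsSet_iff_exists] at hχ1
  obtain ⟨U, hUo, hKU, hU1⟩ := hχ1
  have hχsm : ContDiff ℝ ((⊤ : ℕ∞) : WithTop ℕ∞) ⇑χ := contMDiff_iff_contDiff.mp χ.contMDiff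
  have hχsupp : tsupport ⇑χ ⊆ L := by
    apply closure_minimal ?_ hLc.isClosed
    intro q hq
    by_contra hqL
    exact hq (hχ0 q hqL)
  have hχcs : HasCompactSupport ⇑χ := IsCompact.of_isClosed_subset hLc isClosed_closure hχsupp
  set w : ℝ × ℝ → ℝ := fun p => χ p * u p with hwdef
  have hwsm : ContDiff ℝ ((⊤ : ℕ∞) : WithTop ℕ∞) w := by
    rw [contDiff_iff_contDiffAt]
    intro p
    by_cases hp : p ∈ Ω
    · exact (hχsm.contDiffAt).mul ((hreg p hp _).1)
    · have hp2 : p ∈ (tsupport ⇑χ)ᶜ := fun h => hp (hLΩ (hχsupp h))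
      apply ContDiffAt.congr_of_eventuallyEq (contDiffAt_const (c := 0))
      filter_upwards [(isClosed_tsupport _).isOpen_compl.mem_nhds hp2] with q hq
      simp [hwdef, image_eq_zero_of_notMem_tsupport hq]
  have hwcs : HasCompactSupport w := hχcs.mul_right
  have hUw : ∀ q ∈ U, w q = u q := by
    intro q hq; simp [hwdef, hU1 q hq]
  -- second derivatives of w agree with those of u on U
  have hfd1 : ∀ q ∈ U, fderiv ℝ w q = fderiv ℝ u q := by
    intro q hq
    apply Filter.EventuallyEq.fderiv_eq
    filter_upwards [hUo.mem_nhds hq] with r hr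
    exact hUw r hr
  have hlapw : ∀ p ∈ U, lap2 w p = lap2 u p := by
    intro p hp
    have h1 : ∀ w' : ℝ × ℝ, (fun q => fderiv ℝ w q w') =ᶠ[nhds p]
        (fun q => fderiv ℝ u q w') := by
      intro w'
      filter_upwards [hUo.mem_nhds hp] with r hr
      rw [hfd1 r hr]
    unfold lap2
    rw [(h1 (1, 0)).fderiv_eq, (h1 (0, 1)).fderiv_eq]
  have hzero : ∀ p, φ p * lap2 w p = 0 := by
    intro p
    by_cases hp : p ∈ tsupport φ
    · rw [hlapw p (hKU hp), hharm p (hφΩ hp), mul_zero]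
    · rw [image_eq_zero_of_notMem_tsupport hp, zero_mul]
  have hlapφ0 : ∀ p, p ∉ tsupport φ → lap2 φ p = 0 := by
    have h0 : ∀ q, q ∉ tsupport φ → fderiv ℝ φ q = 0 := by
      intro q hq
      have hev : φ =ᶠ[nhds q] (fun _ => (0 : ℝ)) := by
        filter_upwards [(isClosed_tsupport φ).isOpen_compl.mem_nhds hq] with r hr
        exact image_eq_zero_of_notMem_tsupport hr
      rw [hev.fderiv_eq]
      exact fderiv_const_apply 0
    intro p hp
    have h1 : ∀ w' : ℝ × ℝ, (fun q => fderiv ℝ φ q w') =ᶠ[nhds p] (fun _ => (0 : ℝ)) := by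
      intro w'
      filter_upwards [(isClosed_tsupport φ).isOpen_compl.mem_nhds hp] with r hr
      rw [h0 r hr]; rfl
    unfold lap2
    rw [(h1 (1, 0)).fderiv_eq, (h1 (0, 1)).fderiv_eq]
    simp
  have heqint : ∀ p, lap2 φ p * u p = lap2 φ p * w p := by
    intro p
    by_cases hp : p ∈ tsupport φ
    · rw [hUw p (hKU hp)]
    · rw [hlapφ0 p hp, zero_mul, zero_mul]
  -- integrability facts
  have int1 : Integrable (fun p => fderiv ℝ (fun q => fderiv ℝ φ q (1, 0)) p (1, 0) * w p)
      volume :=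
    mulInteg (smoothD1 (smoothD1 hφsm (1, 0)) (1, 0)).continuous hwsm.continuous
      (suppD1 (suppD1 hφs (1, 0)) (1, 0))
  have int2 : Integrable (fun p => fderiv ℝ (fun q => fderiv ℝ φ q (0, 1)) p (0, 1) * w p)
      volume :=
    mulInteg (smoothD1 (smoothD1 hφsm (0, 1)) (0, 1)).continuous hwsm.continuous
      (suppD1 (suppD1 hφs (0, 1)) (0, 1))
  have int3 : Integrable (fun p => φ p * fderiv ℝ (fun q => fderiv ℝ w q (1, 0)) p (1, 0))
      volume :=
    mulInteg hφsm.continuous (smoothD1 (smoothD1 hwsm (1, 0)) (1, 0)).continuous hφs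
  have int4 : Integrable (fun p => φ p * fderiv ℝ (fun q => fderiv ℝ w q (0, 1)) p (0, 1))
      volume :=
    mulInteg hφsm.continuous (smoothD1 (smoothD1 hwsm (0, 1)) (0, 1)).continuous hφs
  calc ∫ p in Ω, lap2 φ p * u p
      = ∫ p in Ω, lap2 φ p * w p := by simp only [heqint]
    _ = ∫ p, lap2 φ p * w p := by
        apply setIntegral_eq_integral_of_forall_compl_eq_zero
        intro p hp
        rw [hlapφ0 p (fun h => hp (hφΩ h)), zero_mul]
    _ = ∫ p, (fderiv ℝ (fun q => fderiv ℝ φ q (1, 0)) p (1, 0) * w p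
          + fderiv ℝ (fun q => fderiv ℝ φ q (0, 1)) p (0, 1) * w p) := by
        apply integral_congr_ae
        filter_upwards with p
        simp only [lap2, add_mul]
    _ = (∫ p, fderiv ℝ (fun q => fderiv ℝ φ q (1, 0)) p (1, 0) * w p)
          + ∫ p, fderiv ℝ (fun q => fderiv ℝ φ q (0, 1)) p (0, 1) * w p :=
        integral_add int1 int2
    _ = (∫ p, φ p * fderiv ℝ (fun q => fderiv ℝ w q (1, 0)) p (1, 0))
          + ∫ p, φ p * fderiv ℝ (fun q => fderiv ℝ w q (0, 1)) p (0, 1) := by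
        rw [ibp_dir hφsm hwsm hφs hwcs (1, 0), ibp_dir hφsm hwsm hφs hwcs (0, 1)]
    _ = ∫ p, (φ p * fderiv ℝ (fun q => fderiv ℝ w q (1, 0)) p (1, 0)
          + φ p * fderiv ℝ (fun q => fderiv ℝ w q (0, 1)) p (0, 1)) :=
        (integral_add int3 int4).symm
    _ = ∫ p, φ p * lap2 w p := by
        apply integral_congr_ae
        filter_upwards with p
        simp only [lap2, mul_add]
    _ = 0 := by
        simp only [hzero]
        exact integral_zero _ _
end

section
/- If u : Ω → ℝ^m is pointwise differentiable on the open set Ω ⊆ ℝⁿ with Du(x) ∈ L for every x (L a linear subspace of M^{m×n}(ℝ)), then for every ε > 0 the mollification u^ε = u * ρ_ε satisfies D u^ε(x) ∈ L for all x ∈ Ω with dist(x, ∂Ω) > ε. -/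
open MeasureTheory Metric Set Function
open scoped Convolution

theorem aux_closedBall_subset {n : ℕ} {Ω : Set (EuclideanSpace ℝ (Fin n))}
    {x : EuclideanSpace ℝ (Fin n)} (hx : x ∈ Ω) {r : ℝ}
    (hr : r < Metric.infDist x (frontier Ω)) : Metric.closedBall x r ⊆ Ω := by
  rcases eq_or_ne Ω Set.univ with rfl | hne
  · simp
  intro z hz
  by_contra hzΩ
  obtain ⟨y, hy, hyd⟩ := exists_mem_frontier_infDist_compl_eq_dist hx hne
  have h1 : Metric.infDist x (frontier Ω) ≤ dist x y := Metric.infDist_le_dist_of_mem hy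
  have h2 : Metric.infDist x Ωᶜ ≤ dist x z := Metric.infDist_le_dist_of_mem hzΩ
  rw [Metric.mem_closedBall, dist_comm] at hz
  rw [hyd] at h2
  linarith

theorem aux_abs_le_norm {k : ℕ} (x : EuclideanSpace ℝ (Fin k)) (j : Fin k) : |x j| ≤ ‖x‖ := by
  rw [EuclideanSpace.norm_eq, ← Real.sqrt_sq_eq_abs]
  apply Real.sqrt_le_sqrt
  have : |x j| ^ 2 ≤ ∑ i, ‖x i‖ ^ 2 :=
    Finset.single_le_sum (f := fun i => ‖x i‖ ^ 2) (fun i _ => sq_nonneg _) (Finset.mem_univ j)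
  simpa [sq_abs] using this

set_option maxHeartbeats 2000000

/-- Mollification of differentiable solutions of a differential inclusion: if `u` is pointwise
differentiable on the open set `Ω` with `Du(x) ∈ L` (a linear subspace of `m × n` matrices)
for every `x ∈ Ω`, and `ρ_ε` is a smooth mollifier supported in `B_ε(0)` with integral one,
then `u^ε = u * ρ_ε` satisfies `D u^ε(x) ∈ L` at every `x ∈ Ω` with `dist(x, ∂Ω) > ε`. -/
theorem stmt_15 {n m : ℕ} (Ω : Set (EuclideanSpace ℝ (Fin n))) (hΩ : IsOpen Ω)
    (L : Submodule ℝ (EuclideanSpace ℝ (Fin m × Fin n)))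
    (u : EuclideanSpace ℝ (Fin n) → EuclideanSpace ℝ (Fin m))
    (hdiff : ∀ x ∈ Ω, DifferentiableAt ℝ u x)
    (hincl : ∀ x ∈ Ω,
      (WithLp.toLp 2 (fun p : Fin m × Fin n => fderiv ℝ u x (EuclideanSpace.single p.2 1) p.1) :
        EuclideanSpace ℝ (Fin m × Fin n)) ∈ L)
    (ε : ℝ) (hε : 0 < ε) (ρ : EuclideanSpace ℝ (Fin n) → ℝ)
    (hρ : ContDiff ℝ (⊤ : ℕ∞) ρ) (hρsupp : tsupport ρ ⊆ ball 0 ε) (hρint : (∫ y, ρ y) = 1)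
    (uε : EuclideanSpace ℝ (Fin n) → EuclideanSpace ℝ (Fin m))
    (huε : ∀ x, uε x = ∫ y, ρ y • u (x - y)) :
    ∀ x ∈ Ω, ε < infDist x (frontier Ω) →
      DifferentiableAt ℝ uε x ∧
      (WithLp.toLp 2 (fun p : Fin m × Fin n => fderiv ℝ uε x (EuclideanSpace.single p.2 1) p.1) :
        EuclideanSpace ℝ (Fin m × Fin n)) ∈ L := by
  match n, Ω, hΩ, L, u, hdiff, hincl, ρ, hρ, hρsupp, hρint, uε, huε with
  | 0, Ω, hΩ, L, u, hdiff, hincl, ρ, hρ, hρsupp, hρint, uε, huε =>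
    intro x hx hdist
    haveI : Subsingleton (EuclideanSpace ℝ (Fin 0)) :=
      ⟨fun a b => PiLp.ext fun i => i.elim0⟩
    constructor
    · have h : uε = fun _ => uε x := funext fun y => congrArg uε (Subsingleton.elim y x)
      rw [h]
      exact differentiableAt_const _
    · have h : (fun p : Fin m × Fin 0 => fderiv ℝ uε x (EuclideanSpace.single p.2 1) p.1) =
          (0 : EuclideanSpace ℝ (Fin m × Fin 0)) := funext fun p => p.2.elim0
      rw [h]
      exact L.zero_mem
  | (k+1), Ω, hΩ, L, u, hdiff, hincl, ρ, hρ, hρsupp, hρint, uε, huε =>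
    intro x₀ hx₀ hdist
    let E := EuclideanSpace ℝ (Fin (k+1))
    let E' := EuclideanSpace ℝ (Fin m)
    set δ : ℝ := (infDist x₀ (frontier Ω) - ε)/2 with hδdef
    have hδ : 0 < δ := by rw [hδdef]; linarith
    have hεδ : ε + δ < infDist x₀ (frontier Ω) := by rw [hδdef]; linarith
    have hball : closedBall x₀ (ε + δ) ⊆ Ω := aux_closedBall_subset hx₀ hεδ
    set V : Set E := ball x₀ (ε + δ) with hVdef
    have hVΩ : V ⊆ Ω := ball_subset_closedBall.trans hball
    set ut : E → E' := V.indicator u with hutdef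
    have hcontu : ContinuousOn u Ω := fun z hz => (hdiff z hz).continuousAt.continuousWithinAt
    have hint_ut : Integrable ut := by
      rw [hutdef, integrable_indicator_iff measurableSet_ball]
      exact ((hcontu.mono hball).integrableOn_compact
        (isCompact_closedBall x₀ (ε+δ))).mono_set ball_subset_closedBall
    have hcρ : HasCompactSupport ρ :=
      Metric.isCompact_of_isClosed_isBounded (isClosed_tsupport ρ)
        (isBounded_ball.subset hρsupp)
    set Lm : ℝ →L[ℝ] E' →L[ℝ] E' := ContinuousLinearMap.lsmul ℝ ℝ with hLmdef
    have hconv_eq : ∀ x ∈ ball x₀ δ, uε x = (ρ ⋆[Lm, volume] ut) x := by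
      intro x hx
      rw [huε x, convolution_def]
      refine integral_congr_ae (Filter.Eventually.of_forall fun y => ?_)
      by_cases hy : ρ y = 0
      · simp [hy]
      · have hyb : y ∈ ball (0:EuclideanSpace ℝ (Fin (k+1))) ε :=
          hρsupp (subset_tsupport ρ hy)
        have hyV : x - y ∈ V := by
          rw [hVdef, mem_ball]
          have h1 : dist (x - y) x = ‖y‖ := by
            simp [dist_eq_norm]
          calc dist (x - y) x₀ ≤ dist (x - y) x + dist x x₀ := dist_triangle _ _ _
            _ < ε + δ := by
                rw [h1]
                have := mem_ball.1 hx
                have := mem_ball_zero_iff.1 hyb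
                linarith
        have h5 : ut (x - y) = u (x - y) := by
          rw [hutdef]; exact indicator_of_mem hyV u
        simp only [h5, hLmdef, ContinuousLinearMap.lsmul_apply]
    have hder : HasFDerivAt (ρ ⋆[Lm, volume] ut) ((fderiv ℝ ρ ⋆[Lm.precompL E, volume] ut) x₀) x₀ :=
      hcρ.hasFDerivAt_convolution_left _ (hρ.of_le (by simp)) hint_ut.locallyIntegrable x₀
    have huεder : HasFDerivAt uε ((fderiv ℝ ρ ⋆[Lm.precompL E, volume] ut) x₀) x₀ := by
      refine hder.congr_of_eventuallyEq ?_
      filter_upwards [ball_mem_nhds x₀ hδ] with x hx using (hconv_eq x hx)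
    refine ⟨huεder.differentiableAt, ?_⟩
    have hfd : fderiv ℝ uε x₀ = (fderiv ℝ ρ ⋆[Lm.precompL E, volume] ut) x₀ := huεder.fderiv
    -- coordinates of the derivative
    have hce : ConvolutionExistsAt (fderiv ℝ ρ) ut x₀ (Lm.precompL E) volume :=
      (hcρ.fderiv (𝕜 := ℝ)).convolutionExists_left (L := Lm.precompL E) (hρ.continuous_fderiv (by simp))
        hint_ut.locallyIntegrable x₀
    have hint_coord : ∀ (v : E) (i : Fin m),
        Integrable (fun t : E => (fderiv ℝ ρ t v) * ut (x₀ - t) i) := by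
      intro v i
      have h2 := hce.apply_continuousLinearMap v
      have h3 := (EuclideanSpace.proj i (𝕜 := ℝ)).integrable_comp h2
      simpa [hLmdef] using h3
    have hA : ∀ (v : E) (i : Fin m),
        (fderiv ℝ ρ ⋆[Lm.precompL E, volume] ut) x₀ v i
          = ∫ t : E, (fderiv ℝ ρ t v) * ut (x₀ - t) i := by
      intro v i
      have h2 : Integrable (fun t : E => ((Lm.precompL E) (fderiv ℝ ρ t) (ut (x₀ - t))) v)
          volume := hce.apply_continuousLinearMap v
      rw [convolution_def, ContinuousLinearMap.integral_apply hce]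
      calc (∫ t : E, ((Lm.precompL E) (fderiv ℝ ρ t) (ut (x₀ - t))) v) i
          = (EuclideanSpace.proj i : E' →L[ℝ] ℝ)
            (∫ t : E, ((Lm.precompL E) (fderiv ℝ ρ t) (ut (x₀ - t))) v) := rfl
        _ = ∫ t : E, (EuclideanSpace.proj i : E' →L[ℝ] ℝ)
              (((Lm.precompL E) (fderiv ℝ ρ t) (ut (x₀ - t))) v) :=
            (ContinuousLinearMap.integral_comp_comm _ h2).symm
        _ = ∫ t : E, (fderiv ℝ ρ t v) * ut (x₀ - t) i := by
            simp [hLmdef, ContinuousLinearMap.precompL_apply]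
    -- orthogonality
    rw [← Submodule.orthogonal_orthogonal L]
    intro N hN
    rw [PiLp.inner_apply]
    simp only [RCLike.inner_apply, conj_trivial]
    simp only [hfd, hA]
    rw [Finset.sum_congr rfl (fun p _ => mul_comm _ (N p))]
    rw [Finset.sum_congr rfl (fun p _ => (integral_const_mul (N p) _ :
      (_:ℝ) = _).symm), ← integral_finset_sum _
      (fun p _ => (hint_coord (EuclideanSpace.single p.2 1) p.1).const_mul (N p))]
    -- now : ∫ t, ∑ p, N p * (fderiv ρ t (single p.2 1) * ut (x₀ - t) p.1) = 0
    set g : E → ℝ := fun t => ∑ p : Fin m × Fin (k+1),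
      N p * ((fderiv ℝ ρ t (EuclideanSpace.single p.2 1)) * ut (x₀ - t) p.1) with hgdef
    have hgint : Integrable g := integrable_finset_sum _
      (fun p _ => (hint_coord (EuclideanSpace.single p.2 1) p.1).const_mul (N p))
    set κ : (Fin (k+1) → ℝ) ≃L[ℝ] EuclideanSpace ℝ (Fin (k+1)) :=
      (EuclideanSpace.equiv (Fin (k+1)) ℝ).symm with hκdef
    set F : (Fin (k+1) → ℝ) → (Fin (k+1) → ℝ) := fun w j =>
      ρ (κ w) * ∑ i : Fin m, N (i, j) * ut (x₀ - κ w) i with hFdef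
    have hκsingle : ∀ j : Fin (k+1), κ (Pi.single j 1) = EuclideanSpace.single j 1 :=
      fun j => rfl
    have hNM : ∀ z ∈ Ω, ∑ p : Fin m × Fin (k+1),
        (fderiv ℝ u z (EuclideanSpace.single p.2 1) p.1) * N p = 0 := by
      intro z hz
      have h1 := (Submodule.mem_orthogonal L N).1 hN _ (hincl z hz)
      rw [PiLp.inner_apply] at h1
      simpa [RCLike.inner_apply, conj_trivial, mul_comm] using h1
    have hmain : ∀ w : Fin (k+1) → ℝ, DifferentiableAt ℝ F w ∧
        (∑ j, fderiv ℝ F w (Pi.single j 1) j) = g (κ w) := by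
      intro w
      by_cases hw : κ w ∈ tsupport ρ
      · have hz₀V : x₀ - κ w ∈ V := by
          rw [hVdef, mem_ball]
          have h1 : ‖κ w‖ < ε := mem_ball_zero_iff.1 (hρsupp hw)
          have h2 : dist (x₀ - κ w) x₀ = ‖κ w‖ := by simp [dist_eq_norm]
          linarith
        have hz₀Ω : x₀ - κ w ∈ Ω := hVΩ hz₀V
        have hcont : Continuous fun w' : Fin (k+1) → ℝ => x₀ - κ w' :=
          continuous_const.sub κ.continuous
        have hevV : ∀ᶠ w' in nhds w, x₀ - κ w' ∈ V := by
          rw [hVdef]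
          exact hcont.continuousAt.preimage_mem_nhds (isOpen_ball.mem_nhds (hVdef ▸ hz₀V))
        have hevF : F =ᶠ[nhds w] fun w' j =>
            ρ (κ w') * ∑ i : Fin m, N (i, j) * u (x₀ - κ w') i := by
          filter_upwards [hevV] with w' hw'
          funext j
          rw [hFdef]
          simp only []
          rw [hutdef, indicator_of_mem hw']
        have hsub : HasFDerivAt (fun w' : Fin (k+1) → ℝ => x₀ - κ w')
            (-(κ : (Fin (k+1) → ℝ) →L[ℝ] EuclideanSpace ℝ (Fin (k+1)))) w :=
          (κ.hasFDerivAt).const_sub x₀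
        have hu' : HasFDerivAt u (fderiv ℝ u (x₀ - κ w)) (x₀ - κ w) :=
          (hdiff _ hz₀Ω).hasFDerivAt
        have hcomp : HasFDerivAt (fun w' => u (x₀ - κ w'))
            ((fderiv ℝ u (x₀ - κ w)).comp
              (-(κ : (Fin (k+1) → ℝ) →L[ℝ] EuclideanSpace ℝ (Fin (k+1))))) w :=
          hu'.comp w hsub
        have hcoord : ∀ i : Fin m, HasFDerivAt (fun w' => u (x₀ - κ w') i)
            ((EuclideanSpace.proj i (𝕜 := ℝ)).comp ((fderiv ℝ u (x₀ - κ w)).comp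
              (-(κ : (Fin (k+1) → ℝ) →L[ℝ] EuclideanSpace ℝ (Fin (k+1)))))) w :=
          fun i => (EuclideanSpace.proj i (𝕜 := ℝ)).hasFDerivAt.comp w hcomp
        have hρc : HasFDerivAt (fun w' => ρ (κ w'))
            ((fderiv ℝ ρ (κ w)).comp
              (κ : (Fin (k+1) → ℝ) →L[ℝ] EuclideanSpace ℝ (Fin (k+1)))) w :=
          ((hρ.differentiable (by simp)) (κ w)).hasFDerivAt.comp w κ.hasFDerivAt
        set D : Fin (k+1) → (Fin (k+1) → ℝ) →L[ℝ] ℝ := fun j =>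
          ρ (κ w) • (∑ i : Fin m, N (i, j) •
            ((EuclideanSpace.proj i (𝕜 := ℝ)).comp ((fderiv ℝ u (x₀ - κ w)).comp
              (-(κ : (Fin (k+1) → ℝ) →L[ℝ] EuclideanSpace ℝ (Fin (k+1))))))) +
          (∑ i : Fin m, N (i, j) * u (x₀ - κ w) i) • ((fderiv ℝ ρ (κ w)).comp
            (κ : (Fin (k+1) → ℝ) →L[ℝ] EuclideanSpace ℝ (Fin (k+1)))) with hDdef
        have hFu : ∀ j, HasFDerivAt
            (fun w' => ρ (κ w') * ∑ i : Fin m, N (i, j) * u (x₀ - κ w') i) (D j) w :=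
          fun j => hρc.mul (HasFDerivAt.fun_sum fun i _ => (hcoord i).const_mul (N (i, j)))
        have hFuAll : HasFDerivAt
            (fun w' j => ρ (κ w') * ∑ i : Fin m, N (i, j) * u (x₀ - κ w') i)
            (ContinuousLinearMap.pi D) w := hasFDerivAt_pi.2 hFu
        have hF : HasFDerivAt F (ContinuousLinearMap.pi D) w :=
          hFuAll.congr_of_eventuallyEq hevF
        refine ⟨hF.differentiableAt, ?_⟩
        rw [hF.fderiv]
        have hut_eq : ut (x₀ - κ w) = u (x₀ - κ w) := by
          rw [hutdef]; exact indicator_of_mem hz₀V u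
        -- compute the divergence
        have hDj : ∀ j : Fin (k+1), (ContinuousLinearMap.pi D) (Pi.single j 1) j =
            ρ (κ w) * (∑ i : Fin m, N (i, j) *
                (-(fderiv ℝ u (x₀ - κ w) (EuclideanSpace.single j 1) i))) +
            (∑ i : Fin m, N (i, j) * u (x₀ - κ w) i) *
              (fderiv ℝ ρ (κ w) (EuclideanSpace.single j 1)) := by
          intro j
          rw [ContinuousLinearMap.pi_apply, hDdef]
          simp only [ContinuousLinearMap.add_apply, ContinuousLinearMap.smul_apply,
            ContinuousLinearMap.coe_sum', Finset.sum_apply,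
            ContinuousLinearMap.coe_comp', comp_apply, ContinuousLinearMap.neg_apply,
            map_neg, smul_eq_mul, hκsingle]
          ring_nf
          rfl
        rw [Finset.sum_congr rfl (fun j _ => hDj j)]
        rw [Finset.sum_add_distrib]
        have hzero : ∑ j : Fin (k+1), ρ (κ w) * (∑ i : Fin m, N (i, j) *
            (-(fderiv ℝ u (x₀ - κ w) (EuclideanSpace.single j 1) i))) = 0 := by
          have h2 := hNM _ hz₀Ω
          rw [Fintype.sum_prod_type] at h2
          rw [← Finset.mul_sum]
          rw [Finset.sum_comm]
          have : ∑ i : Fin m, ∑ j : Fin (k+1), N (i, j) *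
              (-(fderiv ℝ u (x₀ - κ w) (EuclideanSpace.single j 1) i)) =
              -∑ i : Fin m, ∑ j : Fin (k+1),
                (fderiv ℝ u (x₀ - κ w) (EuclideanSpace.single j 1) i) * N (i, j) := by
            rw [← Finset.sum_neg_distrib]
            exact Finset.sum_congr rfl fun i _ => by
              rw [← Finset.sum_neg_distrib]
              exact Finset.sum_congr rfl fun j _ => by ring
          rw [this, h2]
          ring
        rw [hzero, zero_add]
        -- identify with g (κ w)
        rw [hgdef]
        simp only []
        rw [Fintype.sum_prod_type]
        rw [Finset.sum_comm]
        refine Finset.sum_congr rfl fun j _ => ?_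
        rw [Finset.sum_mul]
        refine Finset.sum_congr rfl fun i _ => ?_
        rw [hut_eq]
        ring
      · -- trivial case : ρ vanishes near κ w
        have h1 : (tsupport ρ)ᶜ ∈ nhds (κ w) :=
          (isClosed_tsupport ρ).isOpen_compl.mem_nhds hw
        have h2 : ∀ᶠ w' in nhds w, κ w' ∉ tsupport ρ :=
          κ.continuous.continuousAt.preimage_mem_nhds h1
        have hevF : F =ᶠ[nhds w] fun _ => (0 : Fin (k+1) → ℝ) := by
          filter_upwards [h2] with w' hw'
          funext j
          rw [hFdef]
          simp only []
          rw [image_eq_zero_of_notMem_tsupport hw', zero_mul]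
          rfl
        have hevρ : ρ =ᶠ[nhds (κ w)] fun _ => (0:ℝ) := by
          filter_upwards [h1] with z hz using image_eq_zero_of_notMem_tsupport hz
        have hρ0 : fderiv ℝ ρ (κ w) = 0 := by
          rw [hevρ.fderiv_eq]; exact fderiv_const_apply 0
        constructor
        · exact (differentiableAt_const _).congr_of_eventuallyEq hevF
        · rw [hevF.fderiv_eq]
          rw [hgdef]
          simp [hρ0, fderiv_const_apply]
    -- transfer the integral to the pi world and apply the divergence theorem
    have hmp := (EuclideanSpace.volume_preserving_symm_measurableEquiv_toLp (Fin (k+1))).symm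
    have hemb := (MeasurableEquiv.toLp 2 (Fin (k+1) → ℝ)).measurableEmbedding
    have htrans : ∫ t, g t = ∫ w : Fin (k+1) → ℝ, g (κ w) :=
      (hmp.integral_comp hemb g).symm
    have hgκint : Integrable (fun w : Fin (k+1) → ℝ => g (κ w)) :=
      (hmp.integrable_comp_emb hemb).2 hgint
    have hρ_zero_of_far : ∀ w : Fin (k+1) → ℝ, (∃ j, ε < |w j|) → κ w ∉ tsupport ρ := by
      rintro w ⟨j, hj⟩ hmem
      have h1 : ‖κ w‖ < ε := mem_ball_zero_iff.1 (hρsupp hmem)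
      have h2 : |w j| ≤ ‖κ w‖ := aux_abs_le_norm (κ w) j
      linarith
    set R : ℝ := ε + 1 with hRdef
    set a : Fin (k+1) → ℝ := fun _ => -R with hadef
    set b : Fin (k+1) → ℝ := fun _ => R with hbdef
    have hle : a ≤ b := fun i => by
      simp only [hadef, hbdef, hRdef]; linarith
    have hIi : IntegrableOn (fun w : Fin (k+1) → ℝ =>
        ∑ i, fderiv ℝ F w (Pi.single i 1) i) (Set.Icc a b) := by
      have hfun : (fun w : Fin (k+1) → ℝ => ∑ i, fderiv ℝ F w (Pi.single i 1) i)
          = fun w => g (κ w) := funext fun w => (hmain w).2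
      rw [hfun]
      exact hgκint.integrableOn
    have hdivthm := integral_divergence_of_hasFDerivAt_off_countable a b hle F
      (fun w => fderiv ℝ F w) ∅ countable_empty
      (fun w _ => ((hmain w).1.continuousAt.continuousWithinAt))
      (fun w _ => ((hmain w).1.hasFDerivAt)) hIi
    have hF_face : ∀ (c : ℝ), |c| = R → ∀ (i : Fin (k+1)) (x : Fin k → ℝ),
        F (Fin.insertNth i c x) i = 0 := by
      intro c hc i x
      have hnm : κ (Fin.insertNth i c x) ∉ tsupport ρ := by
        apply hρ_zero_of_far
        refine ⟨i, ?_⟩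
        rw [Fin.insertNth_apply_same, hc, hRdef]; linarith
      rw [hFdef]
      simp only []
      rw [image_eq_zero_of_notMem_tsupport hnm, zero_mul]
    have hfaces : (∑ i : Fin (k+1),
        ((∫ x in Set.Icc (a ∘ i.succAbove) (b ∘ i.succAbove), F (i.insertNth (b i) x) i) -
          ∫ x in Set.Icc (a ∘ i.succAbove) (b ∘ i.succAbove), F (i.insertNth (a i) x) i)) = 0 := by
      refine Finset.sum_eq_zero fun i _ => ?_
      have h1 : ∀ x : Fin k → ℝ, F (i.insertNth (b i) x) i = 0 := by
        intro x
        refine hF_face (b i) ?_ i x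
        rw [hbdef, hRdef]; simp; linarith
      have h2 : ∀ x : Fin k → ℝ, F (i.insertNth (a i) x) i = 0 := by
        intro x
        refine hF_face (a i) ?_ i x
        simp only [hadef]
        rw [abs_neg]
        exact abs_of_nonneg (by rw [hRdef]; linarith)
      simp [h1, h2]
    have hcompl : ∀ w : Fin (k+1) → ℝ, w ∉ Set.Icc a b → g (κ w) = 0 := by
      intro w hw
      have hnm : κ w ∉ tsupport ρ := by
        apply hρ_zero_of_far
        rw [Set.mem_Icc] at hw
        rw [not_and_or] at hw
        rcases hw with hw | hw
        · rw [Pi.le_def] at hw; push_neg at hw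
          obtain ⟨j, hj⟩ := hw
          refine ⟨j, ?_⟩
          simp only [hadef, hRdef] at hj
          exact lt_abs.2 (Or.inr (by linarith))
        · rw [Pi.le_def] at hw; push_neg at hw
          obtain ⟨j, hj⟩ := hw
          refine ⟨j, ?_⟩
          simp only [hbdef, hRdef] at hj
          exact lt_abs.2 (Or.inl (by linarith))
      have hfd0 : fderiv ℝ ρ (κ w) = 0 := by
        by_contra h
        exact hnm (support_fderiv_subset ℝ (Function.mem_support.2 h))
      rw [hgdef]
      simp [hfd0]
    have hset : ∫ w in Set.Icc a b, g (κ w) = ∫ w : Fin (k+1) → ℝ, g (κ w) :=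
      setIntegral_eq_integral_of_forall_compl_eq_zero hcompl
    have hfun : (fun w : Fin (k+1) → ℝ => ∑ i, fderiv ℝ F w (Pi.single i 1) i)
        = fun w => g (κ w) := funext fun w => (hmain w).2
    rw [htrans, ← hset]
    rw [show (∫ w in Set.Icc a b, g (κ w)) = ∫ w in Set.Icc a b,
      ∑ i, fderiv ℝ F w (Pi.single i 1) i from by rw [hfun]]
    rw [hdivthm, hfaces]
end

section
/- Divergence theorem for differentiable vector fields (special case used): if v : ℝⁿ → ℝⁿ is continuous with compact support and differentiable at every point, then the Gauge (Pfeffer) integral of div v over ℝⁿ (equivalently over any cell containing the support) is zero. -/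
/-!
The divergence theorem for the `GP` integral turns the integral of `div v` over `I` into a sum of
integrals of `v` over the faces of `I`. The support of the continuous field `v` is open, hence
contained in the interior of `I`, so `v` vanishes on every face.
-/

open BoxIntegral

theorem BoxIntegral.Box.interior_Icc {ι : Type*} [Finite ι] (I : Box ι) :
    interior (Box.Icc I) = Box.Ioo I := by
  rw [Box.Icc_def, ← Set.pi_univ_Icc, interior_pi_set Set.finite_univ]
  simp only [_root_.interior_Icc]
  rfl

theorem Continuous.support_subset_interior {X Y : Type*} [TopologicalSpace X]
    [TopologicalSpace Y] [Zero Y] [T1Space Y] {f : X → Y} (hf : Continuous f) {s : Set X}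
    (hs : tsupport f ⊆ s) : Function.support f ⊆ interior s :=
  interior_maximal (subset_tsupport f |>.trans hs) hf.isOpen_support

theorem BoxIntegral.Box.eq_zero_on_face_of_tsupport_subset {ι E : Type*} [Finite ι]
    [TopologicalSpace E] [Zero E] [T1Space E] {I : Box ι} {f : (ι → ℝ) → E}
    (hf : Continuous f) (hI : tsupport f ⊆ Box.Icc I) {x : ι → ℝ} {i : ι}
    (hx : x i = I.lower i ∨ x i = I.upper i) : f x = 0 := by
  by_contra hfx
  have hxI := hf.support_subset_interior hI hfx
  rw [Box.interior_Icc] at hxI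
  obtain ⟨hlower, hupper⟩ := hxI i (Set.mem_univ i)
  rcases hx with h | h <;> simp [h] at hlower hupper

theorem stmt_16_general {n : ℕ} (v : (Fin n → ℝ) → (Fin n → ℝ))
    (hc : Continuous v)
    (hdiff : ∀ x, DifferentiableAt ℝ v x)
    (I : Box (Fin n)) (hI : tsupport v ⊆ Box.Icc I) :
    HasIntegral I IntegrationParams.GP
      (fun x => ∑ j : Fin n, fderiv ℝ v x (Pi.single j 1) j)
      (BoxAdditiveMap.volume : _ →ᵇᵃ (ℝ →L[ℝ] ℝ)) 0 := by
  cases n with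
  | zero => simpa using hasIntegral_zero
  | succ n =>
    have hface (i : Fin (n + 1)) (c : ℝ) (hci : c = I.lower i ∨ c = I.upper i) :
        (fun x => v (i.insertNth c x) i) = 0 := by
      ext x
      simp [Box.eq_zero_on_face_of_tsupport_subset hc hI (x := i.insertNth c x) (i := i)
        (by simpa using hci)]
    convert hasIntegral_GP_divergence_of_forall_hasDerivWithinAt I v (fderiv ℝ v) ∅
      Set.countable_empty (by simp) fun x _ => (hdiff x).hasFDerivAt.hasFDerivWithinAt using 1
    simp [hface _ _ (.inl rfl), hface _ _ (.inr rfl)]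

/-- Divergence theorem for pointwise differentiable vector fields (special case): if
`v : ℝⁿ → ℝⁿ` is continuous with compact support and differentiable at every point, then the
gauge (Henstock–Kurzweil/Pfeffer type, here `GP`) integral of `div v` over any cell containing
the support of `v` is zero. -/
theorem stmt_16 {n : ℕ} (v : (Fin n → ℝ) → (Fin n → ℝ))
    (hc : Continuous v) (hsupp : HasCompactSupport v)
    (hdiff : ∀ x, DifferentiableAt ℝ v x)
    (I : Box (Fin n)) (hI : tsupport v ⊆ Box.Icc I) :
    HasIntegral I IntegrationParams.GP
      (fun x => ∑ j : Fin n, fderiv ℝ v x (Pi.single j 1) j)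
      (BoxAdditiveMap.volume : _ →ᵇᵃ (ℝ →L[ℝ] ℝ)) 0 :=
  stmt_16_general v hc hdiff I hI
end
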